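/- arXiv:2411.01481 — 4 statements merged into one kernel-verified Lean document; each statement's English description precedes it below -/
import Mathlib

section
/- Let A be a q×n complex matrix, W a nonzero n×q complex matrix, and m a positive integer. Then the system of matrix equations X = W·A^{D,W}·W·A·X and A·X = A·W·A^{Ⓦ_m,W}·W·A·A^† in the unknown n×q matrix X has the unique solution X = W·A^{Ⓦ_m,W}·W·A·A^†. -/
open Matrix

/-- Index of a square matrix: least `d` with `rank (B^d) = rank (B^(d+1))`. -/
noncomputable def matInd {ι : Type*} [Fintype ι] [DecidableEq ι] (B : Matrix ι ι ℂ) : ℕ :=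
  sInf {d : ℕ | (B ^ d).rank = (B ^ (d + 1)).rank}

/-- `X` is the Moore-Penrose inverse of `A` (four Penrose equations). -/
noncomputable def IsMP {ι κ : Type*} [Fintype ι] [Fintype κ] (A : Matrix ι κ ℂ) (X : Matrix κ ι ℂ) : Prop :=
  A * X * A = A ∧ X * A * X = X ∧ (A * X)ᴴ = A * X ∧ (X * A)ᴴ = X * A

/-- Column space (range) of a matrix. -/
noncomputable def mrange {ι κ : Type*} [Fintype κ] (M : Matrix ι κ ℂ) : Submodule ℂ (ι → ℂ) :=
  LinearMap.range M.mulVecLin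

/-- Null space of a matrix. -/
noncomputable def mker {ι κ : Type*} [Fintype κ] (M : Matrix ι κ ℂ) : Submodule ℂ (κ → ℂ) :=
  LinearMap.ker M.mulVecLin

/-- `X` is the core-EP inverse of `B`. -/
noncomputable def IsCoreEP {ι : Type*} [Fintype ι] [DecidableEq ι] (B X : Matrix ι ι ℂ) : Prop :=
  X * B * X = X ∧ mrange X = mrange (B ^ matInd B) ∧ mrange Xᴴ = mrange (B ^ matInd B)

/-- `X` is the Drazin inverse of `B`. -/
noncomputable def IsDrazin {ι : Type*} [Fintype ι] [DecidableEq ι] (B X : Matrix ι ι ℂ) : Prop :=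
  X * B * X = X ∧ B * X = X * B ∧ B ^ (matInd B + 1) * X = B ^ matInd B

/-- `X` is the group inverse of `B`. -/
noncomputable def IsGroupInv {ι : Type*} [Fintype ι] (B X : Matrix ι ι ℂ) : Prop :=
  B * X * B = B ∧ X * B * X = X ∧ B * X = X * B

/-- Frobenius norm of a matrix. -/
noncomputable def frobNorm {ι κ : Type*} [Fintype ι] [Fintype κ] (M : Matrix ι κ ℂ) : ℝ :=
  Real.sqrt (∑ i, ∑ j, ‖M i j‖ ^ 2)

/-!
Put `B = W * A`, let `D` be its Drazin inverse and `C` its core-EP inverse. The matrix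
`P = W * A^{D,W} * W * A` equals `B * D`, which is the identity on the range of `B ^ ind B` and hence
fixes `C` and every `B * C * M`; since `W * A^{Ⓦ_m,W}` has that shape, `P` fixes the candidate
solution. Conversely `P` ends with the factor `A`, so `X = P * X` determines `X` from `A * X`.
-/

lemma Matrix.eq_mul_and_mul_eq_iff {R ι κ μ : Type*} [Semiring R] [Fintype ι] [Fintype κ]
    (G : Matrix ι κ R) (A : Matrix κ ι R) {X₀ : Matrix ι μ R} (hX₀ : G * A * X₀ = X₀)
    (X : Matrix ι μ R) : (X = G * A * X ∧ A * X = A * X₀) ↔ X = X₀ := by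
  constructor
  · rintro ⟨hX, hAX⟩
    rw [hX, Matrix.mul_assoc, hAX, ← Matrix.mul_assoc, hX₀]
  · rintro rfl
    exact ⟨hX₀.symm, rfl⟩

lemma Matrix.mul_pow_mul_comm {R ι κ : Type*} [Semiring R] [Fintype ι] [Fintype κ]
    [DecidableEq ι] [DecidableEq κ] (W : Matrix ι κ R) (X : Matrix κ ι R) (m : ℕ) :
    W * (X * W) ^ m = (W * X) ^ m * W := by
  induction m with
  | zero => simp
  | succ m ih =>
    rw [pow_succ, pow_succ, ← Matrix.mul_assoc, ih]
    simp only [Matrix.mul_assoc]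

lemma exists_mul_eq_of_mrange_le {ι κ₁ κ₂ : Type*} [Fintype κ₁] [Fintype κ₂] [DecidableEq κ₁]
    {M : Matrix ι κ₁ ℂ} {N : Matrix ι κ₂ ℂ} (h : mrange M ≤ mrange N) :
    ∃ Z : Matrix κ₂ κ₁ ℂ, M = N * Z := by
  choose z hz using fun j => h ⟨Pi.single j 1, rfl⟩
  refine ⟨Matrix.of fun i j => z j i, ?_⟩
  ext i j
  have hcol : N.mulVec (z j) i = M.mulVec (Pi.single j 1) i := congrFun (hz j) i
  simp only [Matrix.mulVec, dotProduct] at hcol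
  simp [Matrix.mul_apply, hcol, Pi.single_apply]

namespace IsDrazin

variable {ι : Type*} [Fintype ι] [DecidableEq ι] {B D : Matrix ι ι ℂ}

lemma commute (hD : IsDrazin B D) : Commute B D := hD.2.1

lemma mul_self_mul (hD : IsDrazin B D) : D * D * B = D := by
  rw [Matrix.mul_assoc, ← hD.commute.eq, ← Matrix.mul_assoc, hD.1]

lemma mul_mul_pow_index (hD : IsDrazin B D) : B * D * B ^ matInd B = B ^ matInd B := by
  rw [hD.commute.eq, Matrix.mul_assoc, ← pow_succ', ← (hD.commute.pow_left _).eq, hD.2.2]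

lemma mul_mul_eq_of_mrange_le (hD : IsDrazin B D) {κ : Type*} [Fintype κ] [DecidableEq κ]
    {C : Matrix ι κ ℂ} (hC : mrange C ≤ mrange (B ^ matInd B)) : B * D * C = C := by
  obtain ⟨Z, rfl⟩ := exists_mul_eq_of_mrange_le hC
  rw [← Matrix.mul_assoc, hD.mul_mul_pow_index]

lemma mul_mul_mul_mul_eq_of_isCoreEP (hD : IsDrazin B D) {C : Matrix ι ι ℂ} (hC : IsCoreEP B C)
    {κ : Type*} [Fintype κ] (M : Matrix ι κ ℂ) : B * D * (B * C * M) = B * C * M := by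
  have hDC : B * D * C = C := hD.mul_mul_eq_of_mrange_le hC.2.1.le
  calc B * D * (B * C * M) = B * (B * D * C) * M := by
        rw [Matrix.mul_assoc B D, hD.commute.eq]; simp only [Matrix.mul_assoc]
    _ = B * C * M := by rw [hDC]

end IsDrazin

lemma Matrix.mul_pow_mul_mul_pow {R ι κ : Type*} [Semiring R] [Fintype ι] [Fintype κ]
    [DecidableEq ι] [DecidableEq κ] (W : Matrix ι κ R) (A : Matrix κ ι R) (E : Matrix ι ι R)
    (m : ℕ) :
    W * ((A * E * W) ^ m * (A * E) * (W * A) ^ m) = (W * A * E) ^ (m + 1) * (W * A) ^ m := by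
  rw [pow_succ, ← Matrix.mul_assoc, ← Matrix.mul_assoc, Matrix.mul_pow_mul_comm]
  simp only [Matrix.mul_assoc]

theorem stmt0_general {q n : ℕ} (A : Matrix (Fin q) (Fin n) ℂ) (W : Matrix (Fin n) (Fin q) ℂ)
    (m : ℕ)
    (Adag : Matrix (Fin n) (Fin q) ℂ)
    (WAD : Matrix (Fin n) (Fin n) ℂ) (hWAD : IsDrazin (W * A) WAD)
    (WAcep : Matrix (Fin n) (Fin n) ℂ) (hWAcep : IsCoreEP (W * A) WAcep)
    (ADW AepW AWGm : Matrix (Fin q) (Fin n) ℂ)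
    (hADW : ADW = A * (WAD * WAD))
    (hAepW : AepW = A * (WAcep * WAcep))
    (hAWGm : AWGm = (AepW * W) ^ m * AepW * (W * A) ^ m) :
    ∀ X : Matrix (Fin n) (Fin q) ℂ,
      (X = W * ADW * W * A * X ∧ A * X = A * W * AWGm * W * A * Adag) ↔
        X = W * AWGm * W * A * Adag := by
  have hP : W * ADW * W * A = W * A * WAD := by
    rw [hADW]
    simp only [Matrix.mul_assoc]
    rw [← Matrix.mul_assoc WAD WAD, hWAD.mul_self_mul]
  have hfix : W * A * WAD * (W * AWGm) = W * AWGm := by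
    have h := hWAD.mul_mul_mul_mul_eq_of_isCoreEP hWAcep
      (WAcep * ((W * A * (WAcep * WAcep)) ^ m * (W * A) ^ m))
    rw [hAWGm, hAepW, Matrix.mul_pow_mul_mul_pow, pow_succ']
    simpa only [Matrix.mul_assoc] using h
  have hX₀ : W * ADW * W * A * (W * AWGm * W * A * Adag) = W * AWGm * W * A * Adag := by
    rw [hP]
    simpa only [Matrix.mul_assoc] using congrArg (· * (W * A * Adag)) hfix
  intro X
  rw [show A * W * AWGm * W * A * Adag = A * (W * AWGm * W * A * Adag) by
    simp only [Matrix.mul_assoc]]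
  exact Matrix.eq_mul_and_mul_eq_iff _ _ hX₀ X

theorem stmt0 {q n : ℕ} (A : Matrix (Fin q) (Fin n) ℂ) (W : Matrix (Fin n) (Fin q) ℂ)
    (hW : W ≠ 0) (m : ℕ) (hm : 0 < m)
    (Adag : Matrix (Fin n) (Fin q) ℂ) (hAdag : IsMP A Adag)
    (WAD : Matrix (Fin n) (Fin n) ℂ) (hWAD : IsDrazin (W * A) WAD)
    (WAcep : Matrix (Fin n) (Fin n) ℂ) (hWAcep : IsCoreEP (W * A) WAcep)
    (ADW AepW AWGm : Matrix (Fin q) (Fin n) ℂ)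
    (hADW : ADW = A * (WAD * WAD))
    (hAepW : AepW = A * (WAcep * WAcep))
    (hAWGm : AWGm = (AepW * W) ^ m * AepW * (W * A) ^ m) :
    ∀ X : Matrix (Fin n) (Fin q) ℂ,
      (X = W * ADW * W * A * X ∧ A * X = A * W * AWGm * W * A * Adag) ↔
        X = W * AWGm * W * A * Adag :=
  stmt0_general A W m Adag WAD hWAD WAcep hWAcep ADW AepW AWGm hADW hAepW hAWGm
end

section
/- Let A be a q×n complex matrix, W a nonzero n×q complex matrix, m a positive integer, and k = max(Ind(AW), Ind(WA)). Then rank(A^{Ⓦ_m,W,†}) = rank(W·A^{D,W}) = rank((WA)^k), where A^{Ⓦ_m,W,†} = W·A^{Ⓦ_m,W}·W·A·A^†. -/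
/-!
Write `B = W * A`, `d = Ind B`, `X = (WA)^D` and `Y = (WA)^⊕`. Since `B` commutes with `X`,
`W * A^{D,W} = B X² = X`, and `X = B^d X^(d+1)`, `B^d = X B^(d+1)` give `rank X = rank B^d`.
From `Y B Y = Y`, the idempotents `B Y` and `Y B` act as the identity on `R(Y) = R(B^d)`, which `B`
maps onto itself; hence `W * A^{⊕,W} = B Y² = Y` and `Y^j B^j Y = Y`. So
`A^{Ⓦ_m,W,†} = Y^(m+1) B^(m+1) A^†`, and as `B A^† A = B` its rank is that of `Y^(m+1) B^(m+1)`,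
i.e. `rank Y = rank B^d`. Finally the ranges of the powers of `B` are constant from `d` on, so
`rank B^d = rank B^k`.
-/

open Matrix

section Rank

variable {R : Type*} [CommSemiring R] [StrongRankCondition R] {l m n : Type*} [Fintype m] [Fintype n]

theorem Matrix.rank_eq_of_eq_mul_of_eq_mul {M : Matrix l m R} {N : Matrix l n R}
    {C : Matrix n m R} {D : Matrix m n R} (hM : M = N * C) (hN : N = M * D) :
    M.rank = N.rank :=
  le_antisymm (hM ▸ rank_mul_le_left N C) (hN ▸ rank_mul_le_left M D)

end Rank

theorem Matrix.mul_pow_mul' {α n q : Type*} [Semiring α] [Fintype n] [Fintype q] [DecidableEq n]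
    [DecidableEq q] (W : Matrix n q α) (P : Matrix q n α) (j : ℕ) :
    (W * P) ^ j * W = W * (P * W) ^ j := by
  induction j with
  | zero => simp
  | succ j ih => rw [pow_succ', pow_succ', Matrix.mul_assoc, ih]; simp only [Matrix.mul_assoc]

section Range

variable {ι κ μ : Type*} [Fintype κ] [Fintype μ]

theorem mrange_mul (M : Matrix ι κ ℂ) (N : Matrix κ μ ℂ) :
    mrange (M * N) = (mrange N).map M.mulVecLin := by
  simp only [mrange, Matrix.mulVecLin_mul, LinearMap.range_comp]

theorem mrange_mul_le (M : Matrix ι κ ℂ) (N : Matrix κ μ ℂ) : mrange (M * N) ≤ mrange M := by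
  rw [mrange_mul]
  exact LinearMap.map_le_range (f := M.mulVecLin)

variable [Fintype ι]

theorem mul_eq_of_mrange_le [DecidableEq μ] {P : Matrix ι ι ℂ} {N : Matrix ι κ ℂ}
    {M : Matrix ι μ ℂ} (hPN : P * N = N) (h : mrange M ≤ mrange N) : P * M = M := by
  refine ext_of_mulVec_single fun j => ?_
  obtain ⟨v, hv⟩ := h ⟨Pi.single j 1, rfl⟩
  simp only [mulVecLin_apply] at hv
  rw [← mulVec_mulVec, ← hv, mulVec_mulVec, hPN]

theorem mrange_pow_mul_of_map_eq [DecidableEq ι] {B : Matrix ι ι ℂ} {M : Matrix ι κ ℂ}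
    (h : (mrange M).map B.mulVecLin = mrange M) (j : ℕ) : mrange (B ^ j * M) = mrange M := by
  induction j with
  | zero => rw [pow_zero, Matrix.one_mul]
  | succ j ih => rw [pow_succ', Matrix.mul_assoc, mrange_mul, ih, h]

end Range

section Inverses

variable {ι : Type*} [Fintype ι] [DecidableEq ι]

-- The ranks of the powers form an antitone sequence in `ℕ`, so the set in `matInd` is nonempty.
theorem rank_pow_matInd_succ (B : Matrix ι ι ℂ) :
    (B ^ (matInd B + 1)).rank = (B ^ matInd B).rank := by
  have hanti : Antitone fun j => (B ^ j).rank :=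
    antitone_nat_of_succ_le fun j => by rw [pow_succ]; exact rank_mul_le_left _ _
  obtain ⟨d, hd⟩ := WellFoundedLT.antitone_chain_condition hanti
  exact (Nat.sInf_mem (s := {d | (B ^ d).rank = (B ^ (d + 1)).rank}) ⟨d, hd _ d.le_succ⟩).symm

theorem map_mrange_pow_matInd (B : Matrix ι ι ℂ) :
    (mrange (B ^ matInd B)).map B.mulVecLin = mrange (B ^ matInd B) := by
  have hle : mrange (B ^ (matInd B + 1)) ≤ mrange (B ^ matInd B) := by
    rw [pow_succ]
    exact mrange_mul_le _ _
  rw [← mrange_mul, ← pow_succ']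
  exact Submodule.eq_of_le_of_finrank_le hle (rank_pow_matInd_succ B).ge

theorem rank_pow_of_matInd_le {B : Matrix ι ι ℂ} {j : ℕ} (hj : matInd B ≤ j) :
    (B ^ j).rank = (B ^ matInd B).rank := by
  obtain ⟨i, rfl⟩ := Nat.exists_eq_add_of_le' hj
  rw [pow_add]
  exact congrArg (fun S : Submodule ℂ (ι → ℂ) => Module.finrank ℂ S)
    (mrange_pow_mul_of_map_eq (map_mrange_pow_matInd B) i)

variable {B X : Matrix ι ι ℂ}

namespace IsDrazin

theorem mul_mul_self (h : IsDrazin B X) : B * (X * X) = X := by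
  rw [← Matrix.mul_assoc, h.2.1, h.1]

theorem pow_mul_pow_succ (h : IsDrazin B X) (j : ℕ) : B ^ j * X ^ (j + 1) = X := by
  induction j with
  | zero => simp
  | succ j ih =>
    calc B ^ (j + 1) * X ^ (j + 1 + 1) = B ^ j * (B * (X * X)) * X ^ j := by
          rw [pow_succ, pow_succ', pow_succ']; simp only [Matrix.mul_assoc]
      _ = X := by rw [h.mul_mul_self, Matrix.mul_assoc, ← pow_succ', ih]

theorem rank_eq (h : IsDrazin B X) : X.rank = (B ^ matInd B).rank := by
  refine rank_eq_of_eq_mul_of_eq_mul (D := B ^ (matInd B + 1)) (h.pow_mul_pow_succ _).symm ?_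
  rw [← (Commute.pow_left h.2.1 _).eq, h.2.2]

end IsDrazin

namespace IsCoreEP

theorem mrange_pow_mul (h : IsCoreEP B X) (j : ℕ) : mrange (B ^ j * X) = mrange X :=
  mrange_pow_mul_of_map_eq (by rw [h.2.1, map_mrange_pow_matInd]) j

theorem mul_mul_self (h : IsCoreEP B X) : B * (X * X) = X := by
  have hidem : B * X * (B * X) = B * X := by rw [Matrix.mul_assoc, ← Matrix.mul_assoc X, h.1]
  rw [← Matrix.mul_assoc]
  refine mul_eq_of_mrange_le hidem ?_
  rw [← pow_one B, h.mrange_pow_mul]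

theorem pow_mul_pow_mul_self (h : IsCoreEP B X) (j : ℕ) : X ^ j * B ^ j * X = X := by
  induction j with
  | zero => simp
  | succ j ih =>
    have hfix : X * B * (B ^ j * X) = B ^ j * X := mul_eq_of_mrange_le h.1 (h.mrange_pow_mul j).le
    calc X ^ (j + 1) * B ^ (j + 1) * X = X ^ j * (X * B * (B ^ j * X)) := by
          rw [pow_succ, pow_succ']; simp only [Matrix.mul_assoc]
      _ = X := by rw [hfix, ← Matrix.mul_assoc, ih]

theorem rank_eq (h : IsCoreEP B X) : X.rank = (B ^ matInd B).rank :=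
  congrArg (fun S : Submodule ℂ (ι → ℂ) => Module.finrank ℂ S) h.2.1

theorem rank_pow_succ_mul_pow_succ (h : IsCoreEP B X) (j : ℕ) :
    (X ^ (j + 1) * B ^ (j + 1)).rank = X.rank :=
  rank_eq_of_eq_mul_of_eq_mul (by rw [pow_succ', Matrix.mul_assoc]) (h.pow_mul_pow_mul_self _).symm

end IsCoreEP

end Inverses

theorem stmt2_general {q n : ℕ} (A : Matrix (Fin q) (Fin n) ℂ) (W : Matrix (Fin n) (Fin q) ℂ)
    (m : ℕ) (k : ℕ)
    (hk : k = max (matInd (A * W)) (matInd (W * A)))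
    (Adag : Matrix (Fin n) (Fin q) ℂ) (hAdag : IsMP A Adag)
    (WAD : Matrix (Fin n) (Fin n) ℂ) (hWAD : IsDrazin (W * A) WAD)
    (WAcep : Matrix (Fin n) (Fin n) ℂ) (hWAcep : IsCoreEP (W * A) WAcep)
    (ADW AepW AWGm : Matrix (Fin q) (Fin n) ℂ) (AWGMP : Matrix (Fin n) (Fin q) ℂ)
    (hADW : ADW = A * (WAD * WAD))
    (hAepW : AepW = A * (WAcep * WAcep))
    (hAWGm : AWGm = (AepW * W) ^ m * AepW * (W * A) ^ m)
    (hAWGMP : AWGMP = W * AWGm * W * A * Adag) :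
    AWGMP.rank = (W * ADW).rank ∧ (W * ADW).rank = ((W * A) ^ k).rank := by
  have hWADW : W * ADW = WAD := by rw [hADW, ← Matrix.mul_assoc, hWAD.mul_mul_self]
  have hWAepW : W * AepW = WAcep := by rw [hAepW, ← Matrix.mul_assoc, hWAcep.mul_mul_self]
  have hAWGMP_eq : AWGMP = WAcep ^ (m + 1) * (W * A) ^ (m + 1) * Adag := by
    calc AWGMP = (W * AepW) ^ m * (W * AepW) * (W * A) ^ m * (W * A) * Adag := by
          rw [hAWGMP, hAWGm]; simp only [← Matrix.mul_assoc]; rw [← Matrix.mul_pow_mul']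
      _ = _ := by rw [hWAepW, ← pow_succ, Matrix.mul_assoc _ ((W * A) ^ m), ← pow_succ]
  have hAWGMP_mul : AWGMP * A = WAcep ^ (m + 1) * (W * A) ^ (m + 1) := by
    rw [hAWGMP_eq, pow_succ (W * A)]
    simp only [Matrix.mul_assoc]
    rw [← Matrix.mul_assoc A Adag A, hAdag.1]
  refine ⟨?_, ?_⟩
  · rw [hWADW, rank_eq_of_eq_mul_of_eq_mul hAWGMP_eq hAWGMP_mul.symm,
      hWAcep.rank_pow_succ_mul_pow_succ, hWAcep.rank_eq, hWAD.rank_eq]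
  · rw [hWADW, hWAD.rank_eq, hk, rank_pow_of_matInd_le (le_max_right _ _)]

theorem stmt2 {q n : ℕ} (A : Matrix (Fin q) (Fin n) ℂ) (W : Matrix (Fin n) (Fin q) ℂ)
    (hW : W ≠ 0) (m : ℕ) (hm : 0 < m) (k : ℕ)
    (hk : k = max (matInd (A * W)) (matInd (W * A)))
    (Adag : Matrix (Fin n) (Fin q) ℂ) (hAdag : IsMP A Adag)
    (WAD : Matrix (Fin n) (Fin n) ℂ) (hWAD : IsDrazin (W * A) WAD)
    (WAcep : Matrix (Fin n) (Fin n) ℂ) (hWAcep : IsCoreEP (W * A) WAcep)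
    (ADW AepW AWGm : Matrix (Fin q) (Fin n) ℂ) (AWGMP : Matrix (Fin n) (Fin q) ℂ)
    (hADW : ADW = A * (WAD * WAD))
    (hAepW : AepW = A * (WAcep * WAcep))
    (hAWGm : AWGm = (AepW * W) ^ m * AepW * (W * A) ^ m)
    (hAWGMP : AWGMP = W * AWGm * W * A * Adag) :
    AWGMP.rank = (W * ADW).rank ∧ (W * ADW).rank = ((W * A) ^ k).rank :=
  stmt2_general A W m k hk Adag hAdag WAD hWAD WAcep hWAcep ADW AepW AWGm AWGMP hADW hAepW hAWGm
    hAWGMP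
end

section
/- Let A be a q×n complex matrix, W a nonzero n×q complex matrix, and m a positive integer. Then A^{Ⓦ_m,W,†} = ((WA)^{Ⓦ})^m · (WA)^{m-1} · W·A·A^†, where (WA)^{Ⓦ} is the weak group inverse of the square matrix WA. -/
open Matrix

/-- The rank of powers of a matrix must stabilize at some point. -/
lemma aux_ind_nonempty {N : ℕ} (B : Matrix (Fin N) (Fin N) ℂ) :
    {d : ℕ | (B ^ d).rank = (B ^ (d + 1)).rank}.Nonempty := by
  by_contra h
  rw [Set.not_nonempty_iff_eq_empty] at h
  have hlt : ∀ d : ℕ, (B ^ (d+1)).rank < (B ^ d).rank := by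
    intro d
    have hne : (B ^ d).rank ≠ (B ^ (d+1)).rank := by
      intro he
      have : d ∈ {d : ℕ | (B ^ d).rank = (B ^ (d + 1)).rank} := he
      simp [h] at this
    have hle : (B ^ (d+1)).rank ≤ (B ^ d).rank := by
      rw [pow_succ]
      exact Matrix.rank_mul_le_left _ _
    omega
  have key : ∀ d : ℕ, (B ^ d).rank + d ≤ (B ^ 0).rank := by
    intro d
    induction d with
    | zero => omega
    | succ k ih => have := hlt k; omega
  have := key ((B ^ 0).rank + 1)
  omega

/-- Key property of core-EP inverse: `B * C² = C`. -/
lemma aux_key {N : ℕ} (B C : Matrix (Fin N) (Fin N) ℂ) (k : ℕ)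
    (hrk : (B ^ k).rank = (B ^ (k+1)).rank)
    (h1 : C * B * C = C)
    (h2 : LinearMap.range C.mulVecLin = LinearMap.range (B ^ k).mulVecLin) :
    B * (C * C) = C := by
  have hsub : LinearMap.range (B ^ (k+1)).mulVecLin ≤ LinearMap.range (B ^ k).mulVecLin := by
    rw [pow_succ, Matrix.mulVecLin_mul]
    exact LinearMap.range_comp_le_range _ _
  have hreq : LinearMap.range (B ^ (k+1)).mulVecLin = LinearMap.range (B ^ k).mulVecLin :=
    Submodule.eq_of_le_of_finrank_eq hsub hrk.symm
  have hBC : LinearMap.range (B * C).mulVecLin = LinearMap.range C.mulVecLin := by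
    rw [Matrix.mulVecLin_mul, LinearMap.range_comp, h2, ← LinearMap.range_comp,
      ← Matrix.mulVecLin_mul, ← pow_succ', hreq, ← h2]
  have hP : (B * C) * (B * C) = B * C := by
    rw [mul_assoc, ← mul_assoc C B C, h1]
  have hfix : ∀ x, (B * C).mulVec (C.mulVec x) = C.mulVec x := by
    intro x
    have hx : C.mulVec x ∈ LinearMap.range (B * C).mulVecLin := by
      rw [hBC]; exact ⟨x, rfl⟩
    obtain ⟨y, hy⟩ := hx
    simp only [Matrix.mulVecLin_apply] at hy
    rw [← hy, Matrix.mulVec_mulVec, hP]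
  have h3 : B * C * C = C := by
    have hcol : ∀ j, (B * C * C)ᵀ j = Cᵀ j := by
      intro j
      change (B * C * C).col j = C.col j
      rw [← Matrix.mulVec_single_one, ← Matrix.mulVec_single_one (M := C),
        ← Matrix.mulVec_mulVec]
      exact hfix _
    ext i j
    exact congrFun (hcol j) i
  rw [← mul_assoc]; exact h3

lemma aux_shift {p q : ℕ} (W : Matrix (Fin p) (Fin q) ℂ) (X : Matrix (Fin q) (Fin p) ℂ) :
    ∀ r : ℕ, W * (X * W) ^ r * X = (W * X) ^ (r + 1) := by
  intro r
  induction r with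
  | zero => simp [pow_succ]
  | succ s ih =>
    rw [pow_succ, pow_succ (W*X) (s+1), ← ih]
    simp only [Matrix.mul_assoc]

lemma aux_pow {N : ℕ} (B C : Matrix (Fin N) (Fin N) ℂ) (hBCC : B * (C * C) = C) :
    ∀ r : ℕ, (C * C * B) ^ (r + 1) = C ^ (r + 2) * B := by
  intro r
  induction r with
  | zero => simp [pow_succ, mul_assoc]
  | succ s ih =>
    rw [pow_succ, ih, pow_succ C (s+2)]
    calc C ^ (s+2) * B * (C * C * B) = C ^ (s+2) * (B * (C * C)) * B := by
          simp only [Matrix.mul_assoc]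
      _ = C ^ (s + 2) * C * B := by rw [hBCC]

theorem stmt10 {q n : ℕ} (A : Matrix (Fin q) (Fin n) ℂ) (W : Matrix (Fin n) (Fin q) ℂ)
    (hW : W ≠ 0) (m : ℕ) (hm : 0 < m)
    (Adag : Matrix (Fin n) (Fin q) ℂ) (hAdag : IsMP A Adag)
    (WAcep : Matrix (Fin n) (Fin n) ℂ) (hWAcep : IsCoreEP (W * A) WAcep)
    (AepW AWGm : Matrix (Fin q) (Fin n) ℂ) (AWGMP : Matrix (Fin n) (Fin q) ℂ)
    (hAepW : AepW = A * (WAcep * WAcep))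
    (hAWGm : AWGm = (AepW * W) ^ m * AepW * (W * A) ^ m)
    (hAWGMP : AWGMP = W * AWGm * W * A * Adag) :
    AWGMP = (WAcep * WAcep * (W * A)) ^ m * (W * A) ^ (m - 1) * W * A * Adag := by
  subst hAWGMP hAWGm hAepW
  set C := WAcep with hC
  have hBCC : (W * A) * (C * C) = C :=
    aux_key (W * A) C (matInd (W * A)) (Nat.sInf_mem (aux_ind_nonempty (W * A)))
      hWAcep.1 hWAcep.2.1
  have hWX : W * (A * (C * C)) = C := by rw [← Matrix.mul_assoc]; exact hBCC
  obtain ⟨r, rfl⟩ : ∃ r, m = r + 1 := ⟨m - 1, (Nat.succ_pred_eq_of_pos hm).symm⟩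
  simp only [Nat.add_sub_cancel]
  calc W * ((A * (C * C) * W) ^ (r+1) * (A * (C * C)) * (W * A) ^ (r+1)) * W * A * Adag
      = (W * ((A * (C * C)) * W) ^ (r+1) * (A * (C * C))) * ((W * A) ^ (r+1) * (W * A)) * Adag := by
        simp only [Matrix.mul_assoc]
    _ = (W * (A * (C * C))) ^ (r+2) * (W * A) ^ (r+2) * Adag := by
        rw [aux_shift, ← pow_succ]
    _ = C ^ (r+2) * (W * A) ^ (r+2) * Adag := by rw [hWX]
    _ = (C * C * (W * A)) ^ (r+1) * (W * A) ^ r * W * A * Adag := by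
        rw [aux_pow _ _ hBCC, pow_succ (W * A) (r+1), pow_succ' (W * A) r]
        simp only [Matrix.mul_assoc]
end

section
/- Let A be a q×n complex matrix, W a nonzero n×q complex matrix, m a positive integer, and k = max(Ind(AW), Ind(WA)). Then rank(W·(AW)^k) = rank((AW)^k) = rank((WA)^k). -/
open Matrix

/-!
Once `rank B^d = rank B^(d+1)`, the ranges of `B^(d+1) ⊆ B^d` coincide, and applying `B` keeps
them equal, so the ranks of the powers of `B` are constant from `Ind B` on. For `k` at least both
indices, `(WA)^(k+1) = W (AW)^k A` and `(AW)^(k+1) = A (WA)^k W` bound each of `rank (AW)^k`,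
`rank (WA)^k` by the other, and `(AW)^(k+1) = A (W (AW)^k)` gives `rank (AW)^k ≤ rank (W (AW)^k)`.
-/

namespace Matrix

theorem mul_pow_succ_eq_mul_pow_mul {R ι κ : Type*} [Semiring R] [Fintype ι] [Fintype κ]
    [DecidableEq ι] [DecidableEq κ] (A : Matrix ι κ R) (W : Matrix κ ι R) (s : ℕ) :
    (W * A) ^ (s + 1) = W * (A * W) ^ s * A := by
  induction s with
  | zero => simp
  | succ s ih => rw [pow_succ, ih, pow_succ]; simp only [Matrix.mul_assoc]

section Ring

variable {R ι κ : Type*} [CommRing R] [StrongRankCondition R] [Fintype ι] [Fintype κ]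

theorem rank_pow_succ_le [DecidableEq ι] (B : Matrix ι ι R) (d : ℕ) :
    (B ^ (d + 1)).rank ≤ (B ^ d).rank := by
  rw [pow_succ]
  exact rank_mul_le_left _ _

theorem rank_mul_pow_succ_le_rank_pow [DecidableEq ι] [DecidableEq κ] (A : Matrix ι κ R)
    (W : Matrix κ ι R) (s : ℕ) : ((W * A) ^ (s + 1)).rank ≤ ((A * W) ^ s).rank := by
  rw [mul_pow_succ_eq_mul_pow_mul]
  exact (rank_mul_le_left _ _).trans (rank_mul_le_right _ _)

end Ring

section Field

variable {K ι : Type*} [Field K] [Fintype ι] [DecidableEq ι]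

theorem exists_rank_pow_eq_rank_pow_succ (B : Matrix ι ι K) :
    ∃ d, (B ^ d).rank = (B ^ (d + 1)).rank := by
  obtain ⟨d, hd⟩ := WellFounded.not_rel_apply_succ (r := (· < ·)) fun d ↦ (B ^ d).rank
  exact ⟨d, le_antisymm (not_lt.mp hd) (rank_pow_succ_le B d)⟩

theorem range_pow_succ_mulVecLin (B : Matrix ι ι K) (d : ℕ) :
    LinearMap.range (B ^ (d + 1)).mulVecLin =
      (LinearMap.range (B ^ d).mulVecLin).map B.mulVecLin := by
  rw [pow_succ', mulVecLin_mul, LinearMap.range_comp]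

theorem rank_pow_succ_succ_eq_of_rank_pow_eq {B : Matrix ι ι K} {d : ℕ}
    (h : (B ^ d).rank = (B ^ (d + 1)).rank) :
    (B ^ (d + 1)).rank = (B ^ (d + 2)).rank := by
  have hle : LinearMap.range (B ^ (d + 1)).mulVecLin ≤ LinearMap.range (B ^ d).mulVecLin := by
    rw [pow_succ, mulVecLin_mul]
    exact LinearMap.range_comp_le_range _ _
  have heq := Submodule.eq_of_le_of_finrank_le hle h.le
  rw [rank, rank, range_pow_succ_mulVecLin B (d + 1), heq, ← range_pow_succ_mulVecLin, heq]

end Field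

theorem rank_pow_eq_rank_pow_succ_of_matInd_le {ι : Type*} [Fintype ι] [DecidableEq ι]
    (B : Matrix ι ι ℂ) {k : ℕ} (hk : matInd B ≤ k) : (B ^ k).rank = (B ^ (k + 1)).rank := by
  induction k, hk using Nat.le_induction with
  | base => exact Nat.sInf_mem (exists_rank_pow_eq_rank_pow_succ B)
  | succ k _ ih => exact rank_pow_succ_succ_eq_of_rank_pow_eq ih

end Matrix

theorem stmt18_general {q n : ℕ} (A : Matrix (Fin q) (Fin n) ℂ) (W : Matrix (Fin n) (Fin q) ℂ)
    (k : ℕ)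
    (hk : k = max (matInd (A * W)) (matInd (W * A))) :
    (W * (A * W) ^ k).rank = ((A * W) ^ k).rank ∧
      ((A * W) ^ k).rank = ((W * A) ^ k).rank := by
  have hAW : ((A * W) ^ k).rank = ((A * W) ^ (k + 1)).rank :=
    rank_pow_eq_rank_pow_succ_of_matInd_le _ (hk ▸ le_max_left _ _)
  have hWA : ((W * A) ^ k).rank = ((W * A) ^ (k + 1)).rank :=
    rank_pow_eq_rank_pow_succ_of_matInd_le _ (hk ▸ le_max_right _ _)
  have hAW_le : ((A * W) ^ k).rank ≤ (W * (A * W) ^ k).rank := by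
    rw [hAW, pow_succ', Matrix.mul_assoc]
    exact rank_mul_le_right _ _
  refine ⟨(rank_mul_le_right _ _).antisymm hAW_le, le_antisymm ?_ ?_⟩
  · exact hAW ▸ rank_mul_pow_succ_le_rank_pow W A k
  · exact hWA ▸ rank_mul_pow_succ_le_rank_pow A W k

theorem stmt18 {q n : ℕ} (A : Matrix (Fin q) (Fin n) ℂ) (W : Matrix (Fin n) (Fin q) ℂ)
    (hW : W ≠ 0) (m : ℕ) (hm : 0 < m) (k : ℕ)
    (hk : k = max (matInd (A * W)) (matInd (W * A))) :
    (W * (A * W) ^ k).rank = ((A * W) ^ k).rank ∧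
      ((A * W) ^ k).rank = ((W * A) ^ k).rank :=
  stmt18_general A W k hk
end
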